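/- arXiv:1404.5989 — 4 statements merged into one kernel-verified Lean document; each statement's English description precedes it below -/
import Mathlib

section
/- Let M be a locally compact Hausdorff second-countable topological space, G a topological space, and ρ : G → M × M a proper map. Suppose there is a homeomorphism ι : G → G with ι ∘ ι = id, ρ ∘ ι = Prod.swap ∘ ρ, and ι(Ũ) = Ũ, where Ũ ⊆ G is an open set satisfying ρ⁻¹((S × M) ∪ (M × S)) ⊆ Ũ for a subset S ⊆ M. Then for any open U ⊆ M with S ⊆ U there exists an open V ⊆ M with S ⊆ V ⊆ U and ρ⁻¹(V × V) ⊆ Ũ. -/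
/-- In a proper Lie groupoid, every (inversion-closed) groupoid neighborhood of
`G_S ⇉ S` with `S` saturated contains a full groupoid neighborhood.  Here `ρ`
is the anchor (a proper map: continuous, closed, with compact fibers), `ι` is
the inversion, and `Ut` is the groupoid neighborhood. -/
theorem full_neighborhood {G M : Type*} [TopologicalSpace G] [TopologicalSpace M]
    [LocallyCompactSpace M] [T2Space M] [SecondCountableTopology M]
    (ρ : G → M × M) (hρ_cont : Continuous ρ) (hρ_closed : IsClosedMap ρ)
    (hρ_fibers : ∀ y : M × M, IsCompact (ρ ⁻¹' {y}))
    (ι : G ≃ₜ G) (hι_inv : ∀ g, ι (ι g) = g)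
    (hιρ : ρ ∘ ι = Prod.swap ∘ ρ)
    (S : Set M) (Ut : Set G) (hUt_open : IsOpen Ut) (hι_Ut : ι '' Ut = Ut)
    (hS_Ut : ρ ⁻¹' ((S ×ˢ (Set.univ : Set M)) ∪ ((Set.univ : Set M) ×ˢ S)) ⊆ Ut) :
    ∀ U : Set M, IsOpen U → S ⊆ U →
      ∃ V : Set M, IsOpen V ∧ S ⊆ V ∧ V ⊆ U ∧ ρ ⁻¹' (V ×ˢ V) ⊆ Ut := by
  intro U hU hSU
  set C : Set (M × M) := ρ '' Utᶜ with hC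
  have hC_closed : IsClosed C := hρ_closed _ hUt_open.isClosed_compl
  have hC_swap : ∀ p ∈ C, Prod.swap p ∈ C := by
    rintro p ⟨g, hg, rfl⟩
    refine ⟨ι g, fun h => hg ?_, (congrFun hιρ g)⟩
    rw [← hι_inv g, ← hι_Ut]
    exact Set.mem_image_of_mem _ h
  have hC_S : ∀ x ∈ S, ∀ y, (x, y) ∉ C := by
    rintro x hx y ⟨g, hg, hρg⟩
    exact hg (hS_Ut (by rw [Set.mem_preimage, hρg]; exact Or.inl ⟨hx, trivial⟩))
  let K : CompactExhaustion M := CompactExhaustion.choice M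
  set W : ℕ → Set M := fun n => {x | ∀ y ∈ K n, (x, y) ∉ C} with hW
  have hW_open : ∀ n, IsOpen (W n) := by
    intro n
    rw [isOpen_iff_forall_mem_open]
    intro x hx
    obtain ⟨u, v, hu, _, hxu, hKv, huv⟩ :=
      generalized_tube_lemma isCompact_singleton (K.isCompact n)
        hC_closed.isOpen_compl (by
          rintro ⟨a, b⟩ ⟨ha, hb⟩
          rcases ha with rfl
          exact hx b hb)
    exact ⟨u, fun x' hx' y hy => huv ⟨hx', hKv hy⟩, hu, hxu rfl⟩
  have hW_anti : ∀ m n : ℕ, m ≤ n → W n ⊆ W m :=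
    fun m n h x hx y hy => hx y (K.subset h hy)
  set V : Set M := ⋃ n, (W n ∩ U ∩ interior (K n)) with hV
  refine ⟨V, isOpen_iUnion fun n => ((hW_open n).inter hU).inter isOpen_interior,
    ?_, ?_, ?_⟩
  · intro x hx
    obtain ⟨n, hn⟩ := K.exists_mem x
    exact Set.mem_iUnion.2 ⟨n + 1, ⟨fun y _ => hC_S x hx y, hSU hx⟩,
      K.subset_interior_succ n hn⟩
  · intro x hx
    obtain ⟨n, ⟨_, hxU⟩, _⟩ := Set.mem_iUnion.1 hx
    exact hxU
  · intro g hg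
    by_contra hgUt
    have hρgC : ρ g ∈ C := ⟨g, hgUt, rfl⟩
    obtain ⟨hg1, hg2⟩ := hg
    obtain ⟨m, ⟨hxW, _⟩, hxK⟩ := Set.mem_iUnion.1 hg1
    obtain ⟨n, ⟨hyW, _⟩, hyK⟩ := Set.mem_iUnion.1 hg2
    rcases le_total m n with h | h
    · exact hyW (ρ g).1 (K.subset h (interior_subset hxK))
        (hC_swap _ hρgC)
    · exact hxW (ρ g).2 (K.subset h (interior_subset hyK)) hρgC
end

section
/- There is no function b : ℝ × ℝ → ℝ satisfying b(λ, x) + b(λ', x') + λ·x' = b(λ + λ', x + x') for all λ, x, λ', x' ∈ ℝ. Consequently there is no pair of functions a, b : ℝ × ℝ → ℝ satisfying simultaneously a(λ, x) + a(λ', x') = a(λ + λ', x + x') and b(λ, x) + b(λ', x') + λ·x' = b(λ + λ', x + x') for all λ, x, λ', x' ∈ ℝ. -/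
/-- The functional equations obstructing a 2-metric on the Lie group bundle
`ℝ³ ⇉ ℝ` with multiplication `m((λ,x,ε),(λ',x',ε)) = (λ+λ', x+e^{λε}x', ε)`
have no solution. -/
theorem no_solution_functional_equations :
    (¬ ∃ b : ℝ × ℝ → ℝ, ∀ l x l' x' : ℝ,
        b (l, x) + b (l', x') + l * x' = b (l + l', x + x')) ∧
    (¬ ∃ a b : ℝ × ℝ → ℝ,
        (∀ l x l' x' : ℝ, a (l, x) + a (l', x') = a (l + l', x + x')) ∧
        (∀ l x l' x' : ℝ,
          b (l, x) + b (l', x') + l * x' = b (l + l', x + x'))) := by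
  have key : ¬ ∃ b : ℝ × ℝ → ℝ, ∀ l x l' x' : ℝ,
      b (l, x) + b (l', x') + l * x' = b (l + l', x + x') := by
    rintro ⟨b, h⟩
    have h1 := h 1 0 0 1
    have h2 := h 0 1 1 0
    norm_num at h1 h2
    linarith
  exact ⟨key, fun ⟨a, b, _, hb⟩ => key ⟨b, hb⟩⟩
end

section
/- The function β : ℝ⁴ → ℝ defined by β(x₁, x₂, y₁, y₂) = x₁·y₁·(x₁ + y₁) satisfies β(x₁, x₂, y₁, y₂) = −β(−y₁, −y₂, −x₁, −x₂) and β(x₁, x₂, y₁, y₂) = β(y₁, y₂, −x₁−y₁, −x₂−y₂) for all x₁, x₂, y₁, y₂ ∈ ℝ, and β is not identically zero. -/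
/-- The function `β(x₁,x₂,y₁,y₂) = x₁y₁(x₁+y₁)`, a nonzero solution of the
`S₃`-invariance functional equations for extensions of the canonical 1-metric
on the abelian Lie group `ℝ²` to a 2-metric. -/
def betaSol (x₁ x₂ y₁ y₂ : ℝ) : ℝ := x₁ * y₁ * (x₁ + y₁)

theorem betaSol_satisfies_equations_and_nonzero :
    (∀ x₁ x₂ y₁ y₂ : ℝ,
      betaSol x₁ x₂ y₁ y₂ = -betaSol (-y₁) (-y₂) (-x₁) (-x₂)) ∧
    (∀ x₁ x₂ y₁ y₂ : ℝ,
      betaSol x₁ x₂ y₁ y₂ = betaSol y₁ y₂ (-x₁ - y₁) (-x₂ - y₂)) ∧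
    ¬ (∀ x₁ x₂ y₁ y₂ : ℝ, betaSol x₁ x₂ y₁ y₂ = 0) := by
  refine ⟨fun x₁ x₂ y₁ y₂ => by unfold betaSol; ring,
          fun x₁ x₂ y₁ y₂ => by unfold betaSol; ring,
          fun h => by have := h 1 0 1 0; norm_num [betaSol] at this⟩
end

section
/- Let V₁, V₂, W be finite-dimensional real inner product spaces and f₁ : V₁ → W, f₂ : V₂ → W surjective linear maps such that ‖fᵢ v‖ = ‖v‖ for all v in the orthogonal complement of ker fᵢ (i = 1, 2). On the fibered product E = {(v, w) ∈ V₁ × V₂ : f₁ v = f₂ w}, the bilinear form η((v,w),(v',w')) = ⟨v,v'⟩ + ⟨w,w'⟩ − ⟨f₁ v, f₁ v'⟩ is symmetric and positive definite. -/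
/-- The pullback bilinear form
`η((v,w),(v',w')) = ⟨v,v'⟩ + ⟨w,w'⟩ − ⟨f₁ v, f₁ v'⟩` on the fibered product of
two linear Riemannian submersions. -/
noncomputable def pullbackForm {V₁ V₂ W : Type*}
    [NormedAddCommGroup V₁] [InnerProductSpace ℝ V₁]
    [NormedAddCommGroup V₂] [InnerProductSpace ℝ V₂]
    [NormedAddCommGroup W] [InnerProductSpace ℝ W]
    (f₁ : V₁ →ₗ[ℝ] W) (z z' : V₁ × V₂) : ℝ :=
  inner ℝ z.1 z'.1 + inner ℝ z.2 z'.2 - inner ℝ (f₁ z.1) (f₁ z'.1)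


lemma norm_apply_le {V₁ W : Type*}
    [NormedAddCommGroup V₁] [InnerProductSpace ℝ V₁] [FiniteDimensional ℝ V₁]
    [NormedAddCommGroup W] [InnerProductSpace ℝ W]
    (f₁ : V₁ →ₗ[ℝ] W)
    (hf₁_norm : ∀ v ∈ (LinearMap.ker f₁)ᗮ, ‖f₁ v‖ = ‖v‖) (v : V₁) :
    ‖f₁ v‖ ≤ ‖v‖ := by
  set K := LinearMap.ker f₁
  set p : V₁ := (Submodule.orthogonalProjectionOnto Kᗮ v : V₁)
  have hmem : v - p ∈ Kᗮᗮ := Submodule.sub_starProjection_mem_orthogonal (K := Kᗮ) v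
  rw [Submodule.orthogonal_orthogonal] at hmem
  have hfv : f₁ v = f₁ p := by
    have : f₁ (v - p) = 0 := hmem
    rw [map_sub, sub_eq_zero] at this
    exact this
  rw [hfv, hf₁_norm p (Submodule.orthogonalProjectionOnto Kᗮ v).2]
  calc ‖p‖ ≤ ‖Submodule.orthogonalProjectionOnto Kᗮ‖ * ‖v‖ := (Submodule.orthogonalProjectionOnto Kᗮ).le_opNorm v
    _ ≤ 1 * ‖v‖ := by
        gcongr
        exact Submodule.orthogonalProjectionOnto_norm_le Kᗮ
    _ = ‖v‖ := one_mul _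

/-- On the fibered product `{(v,w) : f₁ v = f₂ w}` of two linear Riemannian
submersions, the pullback form is symmetric and positive definite. -/
theorem pullbackForm_symm_posdef {V₁ V₂ W : Type*}
    [NormedAddCommGroup V₁] [InnerProductSpace ℝ V₁] [FiniteDimensional ℝ V₁]
    [NormedAddCommGroup V₂] [InnerProductSpace ℝ V₂] [FiniteDimensional ℝ V₂]
    [NormedAddCommGroup W] [InnerProductSpace ℝ W] [FiniteDimensional ℝ W]
    (f₁ : V₁ →ₗ[ℝ] W) (f₂ : V₂ →ₗ[ℝ] W)
    (hf₁_surj : Function.Surjective f₁) (hf₂_surj : Function.Surjective f₂)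
    (hf₁_norm : ∀ v ∈ (LinearMap.ker f₁)ᗮ, ‖f₁ v‖ = ‖v‖)
    (hf₂_norm : ∀ v ∈ (LinearMap.ker f₂)ᗮ, ‖f₂ v‖ = ‖v‖) :
    (∀ z z' : V₁ × V₂, f₁ z.1 = f₂ z.2 → f₁ z'.1 = f₂ z'.2 →
      pullbackForm f₁ z z' = pullbackForm f₁ z' z) ∧
    (∀ z : V₁ × V₂, f₁ z.1 = f₂ z.2 → z ≠ 0 →
      0 < pullbackForm f₁ z z) := by
  constructor
  · intro z z' _ _
    simp [pullbackForm, real_inner_comm]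
  · intro z hz hz0
    have h1 : ‖f₁ z.1‖ ≤ ‖z.1‖ := norm_apply_le f₁ hf₁_norm z.1
    have key : pullbackForm f₁ z z = ‖z.1‖^2 + ‖z.2‖^2 - ‖f₁ z.1‖^2 := by
      simp [pullbackForm, real_inner_self_eq_norm_sq]
    rw [key]
    rcases eq_or_ne z.2 0 with h2 | h2
    · have hv : z.1 ≠ 0 := by
        intro h; exact hz0 (Prod.ext h h2)
      have hf : f₁ z.1 = 0 := by rw [hz, h2, map_zero]
      rw [hf, h2]
      have : 0 < ‖z.1‖ := norm_pos_iff.mpr hv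
      simp
      positivity
    · have h2' : 0 < ‖z.2‖ := norm_pos_iff.mpr h2
      have : 0 < ‖z.2‖^2 := by positivity
      nlinarith [norm_nonneg (f₁ z.1), norm_nonneg z.1]
end
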